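/- Let ρ = 3 − √8. For a complex number z in the open unit disk with z ∉ [ρ, 1) and z ≠ 0, define S(z) = (1 − 3z − √(1 − 6z + z²))/(4z) using the principal branch of the complex square root, and set R(z) = S(z) + z(1 + S(z)) and Q(z) = (2 − 2z)S(z) − z. Then |R(z)| < 1 and |Q(z)| < 1. -/

import Mathlib

/-!
With `w = √(1 - 6z + z²)`, `R = (A - B)/d` for `A = (1 - z)²`, `B = w(1 + z)`, `d = 4z`, and
`Q = (A - B)/d` for `A = 1 - 4z + z²`, `B = w(1 - z)`, `d = 2z`. In both cases
`(A - B)(A + B) = d²`, so `(A ∓ B)/d` are two numbers with product `1`. If one had modulus `1`, the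
other would be its conjugate and `A/d` would be real in `[-1, 1]`; this makes `z + 1/z` real in
`[-2, 6]`, which puts `z` on the unit circle or on `[ρ, 1)`. Hence
`‖A + B‖² - ‖A - B‖² = 4 Re (A B̄)` never vanishes on the slit disk, which is star-shaped about `0`,
and at `z = 0` it is positive (`A = B = 1`); so `‖A - B‖ < ‖A + B‖`, i.e. `‖(A - B)/d‖ < 1`.
-/

noncomputable def rhoN : ℝ := 3 - Real.sqrt 8

/-- The analytic continuation of the half-animal generating function, using the
principal branch of the complex square root. -/
noncomputable def Sc (z : ℂ) : ℂ :=
  (1 - 3 * z - (1 - 6 * z + z ^ 2) ^ ((1 : ℂ) / 2)) / (4 * z)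

noncomputable def Rc (z : ℂ) : ℂ := Sc z + z * (1 + Sc z)

noncomputable def Qc (z : ℂ) : ℂ := (2 - 2 * z) * Sc z - z

open Complex ComplexConjugate

lemma norm_add_sq_sub_norm_sub_sq (A B : ℂ) :
    ‖A + B‖ ^ 2 - ‖A - B‖ ^ 2 = 4 * (A * conj B).re := by
  rw [Complex.sq_norm, Complex.sq_norm, normSq_add, normSq_sub]
  ring

lemma norm_div_lt_one_of_mul_eq_sq {u v d : ℂ} (h : u * v = d ^ 2) (hlt : ‖u‖ < ‖v‖) :
    ‖u / d‖ < 1 := by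
  rcases eq_or_ne d 0 with rfl | hd
  · simp
  have hprod : ‖u‖ * ‖v‖ = ‖d‖ ^ 2 := by rw [← norm_mul, h, norm_pow]
  rw [norm_div, div_lt_one (norm_pos_iff.2 hd)]
  nlinarith [norm_nonneg u, norm_pos_iff.2 hd]

lemma exists_abs_le_one_eq_mul_of_re_mul_conj_eq_zero {A B d : ℂ}
    (h : (A - B) * (A + B) = d ^ 2) (hre : (A * conj B).re = 0) :
    ∃ c : ℝ, |c| ≤ 1 ∧ A = c * d := by
  have hnorm : ‖A - B‖ = ‖A + B‖ := by
    have := norm_add_sq_sub_norm_sub_sq A B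
    rw [hre, mul_zero, sub_eq_zero] at this
    exact ((pow_left_inj₀ (norm_nonneg _) (norm_nonneg _) two_ne_zero).1 this).symm
  have hprod : ‖A - B‖ * ‖A + B‖ = ‖d‖ ^ 2 := by rw [← norm_mul, h, norm_pow]
  rcases eq_or_ne d 0 with rfl | hd
  · rw [norm_zero, zero_pow two_ne_zero, ← hnorm, mul_self_eq_zero, norm_eq_zero] at hprod
    rw [hprod, norm_zero, eq_comm, norm_eq_zero] at hnorm
    exact ⟨0, by simp, by linear_combination (hprod + hnorm) / 2⟩
  set t := (A - B) / d
  have ht : ‖t‖ = 1 := by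
    have : ‖A - B‖ = ‖d‖ := by nlinarith [norm_nonneg (A - B), norm_nonneg d]
    rw [norm_div, this, div_self (norm_ne_zero_iff.2 hd)]
  have hconj : (A + B) / d = conj t := by
    have h_inv : t * ((A + B) / d) = 1 := by
      simp only [t]; field_simp; linear_combination h
    have h_conj : t * conj t = 1 := by
      rw [mul_conj, normSq_eq_norm_sq, ht]; simp
    exact mul_left_cancel₀ (left_ne_zero_of_mul_eq_one h_inv) (h_inv.trans h_conj.symm)
  refine ⟨t.re, (abs_re_le_norm t).trans ht.le, ?_⟩
  calc A = (t + (A + B) / d) / 2 * d := by simp only [t]; field_simp; ring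
    _ = t.re * d := by rw [hconj, add_conj]; push_cast; ring

lemma IsPreconnected.pos_of_forall_ne_zero {X : Type*} [TopologicalSpace X] {U : Set X}
    (hU : IsPreconnected U) {φ : X → ℝ} (hφ : ContinuousOn φ U) (hne : ∀ x ∈ U, φ x ≠ 0)
    {x₀ : X} (hx₀ : x₀ ∈ U) (h₀ : 0 < φ x₀) {x : X} (hx : x ∈ U) : 0 < φ x := by
  by_contra! h
  obtain ⟨y, hy, hy0⟩ := hU.intermediate_value hx hx₀ hφ ⟨h, h₀.le⟩
  exact hne y hy hy0

theorem norm_sub_div_lt_one_of_isPreconnected {X : Type*} [TopologicalSpace X] {U : Set X}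
    (hU : IsPreconnected U) {A B d : X → ℂ} (hA_cont : ContinuousOn A U)
    (hB_cont : ContinuousOn B U) (h : ∀ x ∈ U, (A x - B x) * (A x + B x) = d x ^ 2)
    (hA : ∀ x ∈ U, ∀ c : ℝ, |c| ≤ 1 → A x ≠ c * d x) {x₀ : X} (hx₀ : x₀ ∈ U)
    (h₀ : 0 < (A x₀ * conj (B x₀)).re) {x : X} (hx : x ∈ U) : ‖(A x - B x) / d x‖ < 1 := by
  have hφ_cont : ContinuousOn (fun x => (A x * conj (B x)).re) U :=
    continuous_re.comp_continuousOn (hA_cont.mul (continuous_conj.comp_continuousOn hB_cont))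
  have hφ_ne : ∀ x ∈ U, (A x * conj (B x)).re ≠ 0 := fun x hx h0 =>
    let ⟨c, hc, hAc⟩ := exists_abs_le_one_eq_mul_of_re_mul_conj_eq_zero (h x hx) h0
    hA x hx c hc hAc
  have hφ_pos := hU.pos_of_forall_ne_zero hφ_cont hφ_ne hx₀ h₀ hx
  refine norm_div_lt_one_of_mul_eq_sq (h x hx) ?_
  have := norm_add_sq_sub_norm_sub_sq (A x) (B x)
  exact (pow_lt_pow_iff_left₀ (norm_nonneg _) (norm_nonneg _) two_ne_zero).1 (by linarith)

def slitDisk (a : ℝ) : Set ℂ :=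
  Metric.ball 0 1 \ (fun x : ℝ => (x : ℂ)) '' Set.Ico a 1

lemma zero_mem_slitDisk {a : ℝ} (ha : 0 < a) : (0 : ℂ) ∈ slitDisk a := by
  refine ⟨by simp, ?_⟩
  rintro ⟨x, hx, hx0⟩
  have : x = 0 := by simpa using hx0
  linarith [hx.1]

lemma starConvex_slitDisk {a : ℝ} (ha : 0 < a) : StarConvex ℝ 0 (slitDisk a) := by
  rintro y ⟨hy, hy_slit⟩ s t hs ht hst
  rw [smul_zero, zero_add]
  have ht1 : t ≤ 1 := by linarith
  rw [mem_ball_zero_iff] at hy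
  refine ⟨?_, ?_⟩
  · rw [mem_ball_zero_iff, norm_smul, Real.norm_of_nonneg ht]
    nlinarith [norm_nonneg y]
  · rintro ⟨x, ⟨hax, hx1⟩, hxy⟩
    simp only at hxy
    have ht0 : 0 < t := ht.lt_of_ne <| by
      rintro rfl
      have : x = 0 := by simpa using hxy
      linarith
    have hy_eq : ((x / t : ℝ) : ℂ) = y := by
      rw [ofReal_div, hxy, real_smul, mul_div_cancel_left₀ _ (ofReal_ne_zero.2 ht0.ne')]
    refine hy_slit ⟨x / t, ⟨?_, ?_⟩, hy_eq⟩
    · rw [le_div_iff₀ ht0]; nlinarith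
    · rw [← hy_eq, norm_real, Real.norm_eq_abs] at hy
      exact (le_abs_self _).trans_lt hy

lemma isPreconnected_slitDisk {a : ℝ} (ha : 0 < a) : IsPreconnected (slitDisk a) :=
  ((starConvex_slitDisk ha).isPathConnected (zero_mem_slitDisk ha)).isConnected.isPreconnected

lemma re_lt_of_mem_slitDisk {a : ℝ} {z : ℂ} (hz : z ∈ slitDisk a) (him : z.im = 0) :
    z.re < a := by
  by_contra! h
  obtain ⟨hz1, hz_slit⟩ := hz
  rw [mem_ball_zero_iff] at hz1
  exact hz_slit ⟨z.re, ⟨h, (le_abs_self _).trans_lt ((abs_re_le_norm z).trans_lt hz1)⟩,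
    Complex.ext (by simp) (by simp [him])⟩

lemma rhoN_pos : 0 < rhoN :=
  sub_pos.2 ((Real.sqrt_lt' (by norm_num)).2 (by norm_num))

lemma rhoN_le_iff {x : ℝ} (hx : x < 3) : rhoN ≤ x ↔ x ^ 2 - 6 * x + 1 ≤ 0 := by
  rw [rhoN, sub_le_comm, Real.le_sqrt (by linarith) (by norm_num)]
  constructor <;> intro h <;> nlinarith

lemma sq_sub_mul_add_one_ne_zero {z : ℂ} (hz : z ∈ slitDisk rhoN) {s : ℝ} (hs₁ : -2 ≤ s)
    (hs₂ : s ≤ 6) : z ^ 2 - s * z + 1 ≠ 0 := by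
  intro h
  have hre : z.re ^ 2 - z.im ^ 2 - s * z.re + 1 = 0 := by
    simpa [sq] using congrArg re h
  have him : z.im * (2 * z.re - s) = 0 := by
    have := congrArg im h
    simp only [sq, sub_im, add_im, mul_im, ofReal_re, ofReal_im, one_im, zero_im] at this
    linear_combination this
  have hnorm : z.re ^ 2 + z.im ^ 2 < 1 := by
    have := mem_ball_zero_iff.1 hz.1
    rw [← sq_lt_one_iff₀ (norm_nonneg z), Complex.sq_norm, normSq_apply] at this
    linarith
  rcases mul_eq_zero.1 him with h_im | h_re
  · have hpos : 0 < z.re := by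
      by_contra! h_nonpos
      nlinarith [mul_nonneg (by linarith : 0 ≤ s + 2) (neg_nonneg.2 h_nonpos)]
    have := re_lt_of_mem_slitDisk hz h_im
    rw [← not_le, rhoN_le_iff (by nlinarith)] at this
    nlinarith
  · nlinarith

lemma one_sub_six_mul_add_sq_mem_slitPlane {z : ℂ} (hz : z ∈ slitDisk rhoN) :
    1 - 6 * z + z ^ 2 ∈ slitPlane := by
  have hre_lt : z.re < 1 := (re_le_norm z).trans_lt (mem_ball_zero_iff.1 hz.1)
  by_cases h_im : z.im = 0
  · have := re_lt_of_mem_slitDisk hz h_im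
    rw [← not_le, rhoN_le_iff (by linarith), not_le] at this
    left
    simp only [sq, add_re, sub_re, one_re, mul_re, re_ofNat, im_ofNat, h_im]
    linarith
  · right
    simp only [sq, add_im, sub_im, one_im, mul_im, re_ofNat, im_ofNat]
    intro h
    exact h_im (by nlinarith)

noncomputable def sqrtDisc (z : ℂ) : ℂ := (1 - 6 * z + z ^ 2) ^ ((1 : ℂ) / 2)

lemma sqrtDisc_mul_self (z : ℂ) : sqrtDisc z * sqrtDisc z = 1 - 6 * z + z ^ 2 := by
  rw [sqrtDisc, ← sq, one_div, cpow_ofNat_inv_pow]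

lemma sqrtDisc_zero : sqrtDisc 0 = 1 := by simp [sqrtDisc]

lemma continuousOn_sqrtDisc : ContinuousOn sqrtDisc (slitDisk rhoN) := fun z hz =>
  ((continuousAt_cpow_const (one_sub_six_mul_add_sq_mem_slitPlane hz)).comp
    (f := fun z : ℂ => 1 - 6 * z + z ^ 2) (by fun_prop)).continuousWithinAt

lemma Rc_eq {z : ℂ} (hz : z ≠ 0) :
    Rc z = ((1 - z) ^ 2 - sqrtDisc z * (1 + z)) / (4 * z) := by
  rw [Rc, Sc, ← sqrtDisc]
  field_simp
  ring

lemma Qc_eq {z : ℂ} (hz : z ≠ 0) :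
    Qc z = ((1 - 4 * z + z ^ 2) - sqrtDisc z * (1 - z)) / (2 * z) := by
  rw [Qc, Sc, ← sqrtDisc]
  field_simp
  ring

lemma norm_Rc_lt_one {z : ℂ} (hz : z ∈ slitDisk rhoN) (hz0 : z ≠ 0) : ‖Rc z‖ < 1 := by
  rw [Rc_eq hz0]
  refine norm_sub_div_lt_one_of_isPreconnected (isPreconnected_slitDisk rhoN_pos)
    (A := fun z => (1 - z) ^ 2) (B := fun z => sqrtDisc z * (1 + z)) (d := fun z => 4 * z) (by fun_prop) (continuousOn_sqrtDisc.mul (by fun_prop))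
    (fun z _ => by linear_combination (-(1 + z) ^ 2) * sqrtDisc_mul_self z) ?_
    (zero_mem_slitDisk rhoN_pos) (by simp [sqrtDisc_zero]) hz
  intro w hw c hc hA
  refine sq_sub_mul_add_one_ne_zero hw (s := 2 + 4 * c) (by linarith [neg_abs_le c])
    (by linarith [le_abs_self c]) ?_
  push_cast
  linear_combination hA

lemma norm_Qc_lt_one {z : ℂ} (hz : z ∈ slitDisk rhoN) (hz0 : z ≠ 0) : ‖Qc z‖ < 1 := by
  rw [Qc_eq hz0]
  refine norm_sub_div_lt_one_of_isPreconnected (isPreconnected_slitDisk rhoN_pos)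
    (A := fun z => 1 - 4 * z + z ^ 2) (B := fun z => sqrtDisc z * (1 - z)) (d := fun z => 2 * z)
    (by fun_prop) (continuousOn_sqrtDisc.mul (by fun_prop))
    (fun z _ => by linear_combination (-(1 - z) ^ 2) * sqrtDisc_mul_self z) ?_
    (zero_mem_slitDisk rhoN_pos) (by simp [sqrtDisc_zero]) hz
  intro w hw c hc hA
  refine sq_sub_mul_add_one_ne_zero hw (s := 4 + 2 * c) (by linarith [neg_abs_le c])
    (by linarith [le_abs_self c]) ?_
  push_cast
  linear_combination hA

theorem abs_R_lt_one_and_abs_Q_lt_one (z : ℂ)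
    (hz1 : ‖z‖ < 1) (hz0 : z ≠ 0)
    (hzseg : z ∉ (fun x : ℝ => (x : ℂ)) '' Set.Ico rhoN 1) :
    ‖Rc z‖ < 1 ∧ ‖Qc z‖ < 1 := by
  have hz : z ∈ slitDisk rhoN := ⟨mem_ball_zero_iff.2 hz1, hzseg⟩
  exact ⟨norm_Rc_lt_one hz hz0, norm_Qc_lt_one hz hz0⟩
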